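/- arXiv:2410.00555 — 3 statements merged into one kernel-verified Lean document; each statement's English description precedes it below -/
import Mathlib

section
/- Let S : [0, δ) × ℂ → ℂ be such that r ↦ S(r,s) is smooth on [0,δ), S and all its r-derivatives are entire in s and jointly continuous, and S(r,s) is compactly supported in r. Then for fixed n ≥ 1, the function F(s) = ∫₀^∞ r^{s+n−1} S(r,s) dr, defined for Re s > −n, extends to a meromorphic function on ℂ whose only singularities are simple poles at s = −n − j (j = 0, 1, 2, …) with residue (1/j!) ∂^j S/∂r^j (0, −n−j). -/
open MeasureTheory Filter Set Metric Complex Topology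

namespace MellinCont

theorem iteratedDeriv_zero_fun {J : ℕ} : iteratedDeriv J (fun _ : ℝ => (0:ℂ)) = fun _ => 0 := by
  induction J with
  | zero => simp
  | succ k ih => rw [iteratedDeriv_succ']; simpa using ih

variable (S : ℝ → ℂ → ℂ) (n : ℕ)

/-- the J-th r-derivative -/
noncomputable def fd (J : ℕ) (s : ℂ) (r : ℝ) : ℂ := iteratedDeriv J (fun r' => S r' s) r

noncomputable def g (b : ℝ) (J : ℕ) (s : ℂ) : ℂ :=
  ∫ r in Set.Ioc (0:ℝ) b, (r:ℂ) ^ (s + n + J - 1) * fd S J s r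

noncomputable def P (J : ℕ) (s : ℂ) : ℂ := ∏ i ∈ Finset.range J, (s + n + i)

theorem fd_vanish {c : ℝ} (hc : ∀ s : ℂ, ∀ r : ℝ, c ≤ r → S r s = 0)
    (J : ℕ) (s : ℂ) {r : ℝ} (hr : c < r) : fd S J s r = 0 := by
  have hev : (fun r' => S r' s) =ᶠ[nhds r] (fun _ => (0:ℂ)) := by
    filter_upwards [isOpen_Ioi.mem_nhds hr] with x hx
    exact hc s x (le_of_lt hx)
  rw [fd, hev.iteratedDeriv_eq J, iteratedDeriv_zero_fun]

theorem fd_cont (hcont : ∀ j : ℕ, Continuous (fun p : ℝ × ℂ => iteratedDeriv j (fun r => S r p.2) p.1))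
    (J : ℕ) (s : ℂ) : Continuous (fd S J s) :=
  (hcont J).comp (continuous_id.prodMk continuous_const)

end MellinCont

open MeasureTheory Filter Set Metric Complex

section helpers

theorem contOn_cpow_mul {b : ℝ} {w : ℂ} {φ : ℝ → ℂ} (hφ : Continuous φ) :
    ContinuousOn (fun r : ℝ => (r:ℂ) ^ w * φ r) (Set.Ioc 0 b) := by
  intro r hr
  exact ((Complex.continuousAt_ofReal_cpow_const r w (Or.inr hr.1.ne')).mul
    hφ.continuousAt).continuousWithinAt

theorem integrable_cpow_mul {b : ℝ} (hb : 0 < b) {w : ℂ} (hw : -1 < w.re) {φ : ℝ → ℂ}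
    (hφ : Continuous φ) :
    IntegrableOn (fun r : ℝ => (r:ℂ) ^ w * φ r) (Set.Ioc 0 b) := by
  obtain ⟨M, hM⟩ := isCompact_Icc.exists_bound_of_continuousOn
    (s := Set.Icc (0:ℝ) b) hφ.continuousOn
  have hint : IntegrableOn (fun r : ℝ => M * r ^ w.re) (Set.Ioc 0 b) :=
    ((intervalIntegrable_iff_integrableOn_Ioc_of_le hb.le).mp
      (intervalIntegral.intervalIntegrable_rpow' hw)).const_mul M
  refine hint.integrable.mono' ((contOn_cpow_mul hφ).aestronglyMeasurable measurableSet_Ioc) ?_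
  filter_upwards [ae_restrict_mem measurableSet_Ioc] with r hr
  rw [norm_mul, Complex.norm_cpow_eq_rpow_re_of_pos hr.1]
  calc r ^ w.re * ‖φ r‖ ≤ r ^ w.re * M :=
        mul_le_mul_of_nonneg_left (hM r ⟨hr.1.le, hr.2⟩) (Real.rpow_nonneg hr.1.le _)
    _ = M * r ^ w.re := mul_comm _ _

theorem integrable_log_rpow_mul {b : ℝ} (hb : 0 < b) {x : ℝ} (hx : -1 < x) :
    IntegrableOn (fun r : ℝ => |Real.log r| * r ^ x) (Set.Ioc 0 b) := by
  set η : ℝ := (x + 1) / 2 with hη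
  have hη0 : 0 < η := by rw [hη]; linarith
  have hx' : -1 < x - η := by rw [hη]; linarith
  set C : ℝ := (max 0 (Real.log b)) * (1 + b ^ x) with hC
  have hC0 : 0 ≤ C := mul_nonneg (le_max_left 0 _) (add_nonneg zero_le_one (Real.rpow_nonneg hb.le x))
  have hdom : IntegrableOn (fun r : ℝ => r ^ (x - η) / η + C) (Set.Ioc 0 b) := by
    refine Integrable.add ?_ (integrableOn_const measure_Ioc_lt_top.ne)
    exact ((intervalIntegrable_iff_integrableOn_Ioc_of_le hb.le).mp
      (intervalIntegral.intervalIntegrable_rpow' hx')).div_const η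
  refine hdom.integrable.mono' ?_ ?_
  · refine ContinuousOn.aestronglyMeasurable ?_ measurableSet_Ioc
    intro r hr
    exact (((Real.continuousAt_log hr.1.ne').abs).mul
      (Real.continuousAt_rpow_const r x (Or.inl hr.1.ne'))).continuousWithinAt
  · filter_upwards [ae_restrict_mem measurableSet_Ioc] with r hr
    rw [Real.norm_eq_abs, _root_.abs_of_nonneg (mul_nonneg (abs_nonneg _) (Real.rpow_nonneg hr.1.le _))]
    rcases le_or_gt r 1 with h1 | h1
    · have hlog : |Real.log r| ≤ r ^ (-η) / η := by
        rw [_root_.abs_of_nonpos (Real.log_nonpos hr.1.le h1)]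
        have := Real.log_le_sub_one_of_pos (x := r ^ (-η)) (Real.rpow_pos_of_pos hr.1 _)
        rw [Real.log_rpow hr.1] at this
        rw [le_div_iff₀ hη0]
        nlinarith [Real.rpow_nonneg hr.1.le (-η)]
      have : |Real.log r| * r ^ x ≤ (r ^ (-η) / η) * r ^ x :=
        mul_le_mul_of_nonneg_right hlog (Real.rpow_nonneg hr.1.le _)
      refine this.trans (le_add_of_le_of_nonneg (le_of_eq ?_) hC0)
      rw [div_mul_eq_mul_div, ← Real.rpow_add hr.1]
      ring_nf
    · have hb1 : 1 < b := h1.trans_le hr.2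
      have hlog : |Real.log r| ≤ max 0 (Real.log b) := by
        rw [_root_.abs_of_nonneg (Real.log_nonneg h1.le)]
        exact le_max_of_le_right (Real.log_le_log hr.1 hr.2)
      have hrx : r ^ x ≤ 1 + b ^ x := by
        rcases le_or_gt 0 x with hx0 | hx0
        · exact le_add_of_nonneg_of_le zero_le_one
            (Real.rpow_le_rpow hr.1.le hr.2 hx0)
        · refine le_add_of_le_of_nonneg ?_ (by positivity)
          exact (Real.rpow_le_one_of_one_le_of_nonpos h1.le hx0.le)
      refine le_add_of_nonneg_of_le (by positivity) ?_
      exact mul_le_mul hlog hrx (Real.rpow_nonneg hr.1.le _) (le_max_left _ _)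

end helpers

namespace MellinCont

variable (S : ℝ → ℂ → ℂ) (n : ℕ)

theorem g_differentiableAt
    (hcont : ∀ j : ℕ, Continuous (fun p : ℝ × ℂ => iteratedDeriv j (fun r => S r p.2) p.1))
    (hentire : ∀ j : ℕ, ∀ r : ℝ, ∀ s : ℂ,
      AnalyticAt ℂ (fun z => iteratedDeriv j (fun r' => S r' z) r) s)
    {b : ℝ} (hb : 0 < b) (J : ℕ) {s₀ : ℂ}
    (hs₀ : -(n:ℝ) - (J:ℝ) < s₀.re) : DifferentiableAt ℂ (g S n b J) s₀ := by
  have ha : (0:ℝ) < s₀.re + n + J := by linarith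
  set a : ℝ := s₀.re + n + J with ha'
  set ε : ℝ := a / 4 with hε'
  have hε : 0 < ε := by positivity
  obtain ⟨M, hM⟩ := ((isCompact_Icc (a := (0:ℝ)) (b := b)).prod
    (isCompact_closedBall s₀ (2*ε))).exists_bound_of_continuousOn (hcont J).continuousOn
  have hMfd : ∀ r ∈ Set.Icc (0:ℝ) b, ∀ z ∈ closedBall s₀ (2*ε), ‖fd S J z r‖ ≤ M :=
    fun r hr z hz => hM (r, z) ⟨hr, hz⟩
  have hfd_ent : ∀ r, Differentiable ℂ (fun z => fd S J z r) :=
    fun r z => (hentire J r z).differentiableAt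
  have hDbound : ∀ r ∈ Set.Icc (0:ℝ) b, ∀ z ∈ ball s₀ ε,
      ‖deriv (fun w => fd S J w r) z‖ ≤ M / ε := by
    intro r hr z hz
    refine Complex.norm_deriv_le_of_forall_mem_sphere_norm_le hε ((hfd_ent r).diffContOnCl) ?_
    intro w hw
    refine hMfd r hr w ?_
    have h1 : dist w z = ε := mem_sphere.mp hw
    have h2 : dist z s₀ < ε := mem_ball.mp hz
    have h3 : dist w s₀ ≤ dist w z + dist z s₀ := dist_triangle _ _ _
    exact mem_closedBall.mpr (by rw [h1] at h3; linarith)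
  set F : ℂ → ℝ → ℂ := fun z r => (r:ℂ) ^ (z + n + J - 1) * fd S J z r with hF
  set F' : ℂ → ℝ → ℂ := fun z r =>
    Complex.log r * ((r:ℂ) ^ (z + n + J - 1) * fd S J z r)
      + (r:ℂ) ^ (z + n + J - 1) * deriv (fun w => fd S J w r) z with hF'
  have hre : ∀ z : ℂ, (z + n + J - 1).re = z.re + n + J - 1 := by intro z; simp
  have hzre : ∀ z ∈ ball s₀ ε, |z.re - s₀.re| < ε := by
    intro z hz
    calc |z.re - s₀.re| = |(z - s₀).re| := by rw [Complex.sub_re]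
      _ ≤ ‖z - s₀‖ := Complex.abs_re_le_norm _
      _ < ε := by rwa [← mem_ball_iff_norm]
  have hcpow : ∀ r ∈ Set.Ioc (0:ℝ) b, ∀ z ∈ ball s₀ ε,
      ‖(r:ℂ) ^ (z + n + J - 1)‖ ≤ r ^ (a - ε - 1) + r ^ (a + ε - 1) := by
    intro r hr z hz
    rw [Complex.norm_cpow_eq_rpow_re_of_pos hr.1, hre]
    have h := abs_lt.mp (hzre z hz)
    have h1 : a - ε - 1 ≤ z.re + n + J - 1 := by rw [ha']; linarith [h.1]
    have h2 : z.re + n + J - 1 ≤ a + ε - 1 := by rw [ha']; linarith [h.2]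
    rcases le_or_gt r 1 with h3 | h3
    · exact le_add_of_le_of_nonneg (Real.rpow_le_rpow_of_exponent_ge hr.1 h3 h1)
        (Real.rpow_nonneg hr.1.le _)
    · exact le_add_of_nonneg_of_le (Real.rpow_nonneg hr.1.le _)
        (Real.rpow_le_rpow_of_exponent_le h3.le h2)
  have hM0 : 0 ≤ M := le_trans (norm_nonneg _)
    (hM (0, s₀) ⟨⟨le_refl _, hb.le⟩, mem_closedBall_self (by positivity)⟩)
  set bnd : ℝ → ℝ := fun r => |Real.log r| * r ^ (a - ε - 1) * M
      + |Real.log r| * r ^ (a + ε - 1) * M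
      + (r ^ (a - ε - 1) + r ^ (a + ε - 1)) * (M / ε) with hbnd
  have hx₁ : (-1:ℝ) < a - ε - 1 := by rw [hε']; linarith
  have hx₂ : (-1:ℝ) < a + ε - 1 := by linarith
  have h5 : Integrable bnd (volume.restrict (Set.Ioc (0:ℝ) b)) := by
    refine (((integrable_log_rpow_mul hb hx₁).mul_const M).add
      ((integrable_log_rpow_mul hb hx₂).mul_const M)).add ?_
    refine Integrable.mul_const ?_ _
    exact ((intervalIntegrable_iff_integrableOn_Ioc_of_le hb.le).mp
        (intervalIntegral.intervalIntegrable_rpow' hx₁)).add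
      ((intervalIntegrable_iff_integrableOn_Ioc_of_le hb.le).mp
        (intervalIntegral.intervalIntegrable_rpow' hx₂))
  have h4 : ∀ᵐ r ∂(volume.restrict (Set.Ioc (0:ℝ) b)), ∀ z ∈ ball s₀ ε, ‖F' z r‖ ≤ bnd r := by
    filter_upwards [ae_restrict_mem measurableSet_Ioc] with r hr z hz
    have hρ := hcpow r hr z hz
    have hρ0 : (0:ℝ) ≤ r ^ (a - ε - 1) + r ^ (a + ε - 1) :=
      add_nonneg (Real.rpow_nonneg hr.1.le _) (Real.rpow_nonneg hr.1.le _)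
    have hfdb : ‖fd S J z r‖ ≤ M := hMfd r ⟨hr.1.le, hr.2⟩ z
      ((ball_subset_closedBall.trans (closedBall_subset_closedBall (by linarith))) hz)
    have hlog : ‖Complex.log (r:ℂ)‖ = |Real.log r| := by
      rw [← Complex.ofReal_log hr.1.le, Complex.norm_real, Real.norm_eq_abs]
    have hD : ‖deriv (fun w => fd S J w r) z‖ ≤ M / ε := hDbound r ⟨hr.1.le, hr.2⟩ z hz
    calc ‖F' z r‖ ≤ ‖Complex.log (r:ℂ) * ((r:ℂ) ^ (z + n + J - 1) * fd S J z r)‖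
          + ‖(r:ℂ) ^ (z + n + J - 1) * deriv (fun w => fd S J w r) z‖ := norm_add_le _ _
      _ ≤ |Real.log r| * ((r ^ (a - ε - 1) + r ^ (a + ε - 1)) * M)
          + (r ^ (a - ε - 1) + r ^ (a + ε - 1)) * (M / ε) := by
          rw [norm_mul, norm_mul, hlog]
          refine add_le_add ?_ ((norm_mul_le _ _).trans (mul_le_mul hρ hD (norm_nonneg _) hρ0))
          refine mul_le_mul_of_nonneg_left ?_ (abs_nonneg _)
          exact mul_le_mul hρ hfdb (norm_nonneg _) hρ0
      _ = bnd r := by rw [hbnd]; ring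
  have h1 : ∀ᶠ z in 𝓝 s₀, AEStronglyMeasurable (F z) (volume.restrict (Set.Ioc (0:ℝ) b)) :=
    Eventually.of_forall fun z =>
      (contOn_cpow_mul (fd_cont S hcont J z)).aestronglyMeasurable measurableSet_Ioc
  have h2 : Integrable (F s₀) (volume.restrict (Set.Ioc (0:ℝ) b)) :=
    integrable_cpow_mul hb (by rw [hre]; linarith) (fd_cont S hcont J s₀)
  have hDmeas : AEMeasurable (fun r => deriv (fun w => fd S J w r) s₀)
      (volume.restrict (Set.Ioc (0:ℝ) b)) := by
    refine aemeasurable_of_tendsto_metrizable_ae atTop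
      (f := fun (k : ℕ) (r : ℝ) => (((k:ℂ)+1)⁻¹)⁻¹ * (fd S J (s₀ + ((k:ℂ)+1)⁻¹) r - fd S J s₀ r))
      (fun k => (Continuous.mul continuous_const
        ((fd_cont S hcont J _).sub (fd_cont S hcont J s₀))).measurable.aemeasurable) ?_
    refine Eventually.of_forall fun r => ?_
    have hd := (hfd_ent r s₀).hasDerivAt
    rw [hasDerivAt_iff_tendsto_slope] at hd
    have hk0 : ∀ k : ℕ, ((k:ℂ)+1)⁻¹ ≠ 0 := by
      intro k; simp only [ne_eq, inv_eq_zero]; exact Nat.cast_add_one_ne_zero k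
    have hu : Tendsto (fun k : ℕ => s₀ + ((k:ℂ)+1)⁻¹) atTop (nhdsWithin s₀ {s₀}ᶜ) := by
      refine tendsto_nhdsWithin_iff.mpr ⟨?_, ?_⟩
      · have h0 : Tendsto (fun k : ℕ => ((k:ℂ)+1)⁻¹) atTop (𝓝 0) := by
          have := tendsto_one_div_add_atTop_nhds_zero_nat (𝕜 := ℝ)
          have h2 := (Complex.continuous_ofReal.tendsto 0).comp this
          refine h2.congr fun k => ?_
          simp only [Function.comp_apply, one_div]
          push_cast
          ring
        simpa using tendsto_const_nhds.add h0
      · refine Eventually.of_forall fun k => ?_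
        simp only [Set.mem_compl_iff, Set.mem_singleton_iff]
        intro hcontr
        exact hk0 k (by linear_combination hcontr - s₀)
    have := hd.comp hu
    refine this.congr fun k => ?_
    simp only [Function.comp_apply]
    rw [slope_def_field, add_sub_cancel_left, div_eq_inv_mul]
  have h3 : AEStronglyMeasurable (F' s₀) (volume.restrict (Set.Ioc (0:ℝ) b)) := by
    refine AEStronglyMeasurable.add ?_ ?_
    · refine ContinuousOn.aestronglyMeasurable ?_ measurableSet_Ioc
      intro r hr
      refine ContinuousWithinAt.mul ?_ (contOn_cpow_mul (fd_cont S hcont J s₀) r hr)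
      exact ((continuousAt_clog (by simpa using Complex.ofReal_mem_slitPlane.mpr hr.1)).comp
        Complex.continuous_ofReal.continuousAt).continuousWithinAt
    · refine AEMeasurable.aestronglyMeasurable (AEMeasurable.mul ?_ hDmeas)
      exact ContinuousOn.aemeasurable (fun r hr =>
        (Complex.continuousAt_ofReal_cpow_const r _ (Or.inr hr.1.ne')).continuousWithinAt)
        measurableSet_Ioc
  have h6 : ∀ᵐ r ∂(volume.restrict (Set.Ioc (0:ℝ) b)), ∀ z ∈ ball s₀ ε,
      HasDerivAt (fun w => F w r) (F' z r) z := by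
    filter_upwards [ae_restrict_mem measurableSet_Ioc] with r hr z hz
    have hr0 : (r:ℂ) ≠ 0 := Complex.ofReal_ne_zero.mpr hr.1.ne'
    have hc : HasDerivAt (fun w : ℂ => (r:ℂ) ^ (w + n + J - 1))
        ((r:ℂ) ^ (z + n + J - 1) * Complex.log r) z := by
      have := ((((hasDerivAt_id z).add_const ((n:ℂ))).add_const ((J:ℂ))).sub_const
        (1:ℂ)).const_cpow (Or.inl hr0)
      simpa using this
    have hfdz : HasDerivAt (fun w => fd S J w r) (deriv (fun w => fd S J w r) z) z :=
      (hfd_ent r z).hasDerivAt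
    have hmul := hc.mul hfdz
    refine hmul.congr_deriv ?_
    simp only [hF']; ring
  have main := hasDerivAt_integral_of_dominated_loc_of_deriv_le (ball_mem_nhds s₀ hε) h1 h2 h3 h4 h5 h6
  exact main.2.differentiableAt


variable (S : ℝ → ℂ → ℂ) (n : ℕ)

theorem hasDerivAt_fd (hsmooth : ∀ s : ℂ, ContDiff ℝ (⊤ : ℕ∞) (fun r => S r s)) (J : ℕ) (s : ℂ) (x : ℝ) :
    HasDerivAt (fd S J s) (fd S (J+1) s x) x := by
  have hdiff : Differentiable ℝ (iteratedDeriv J (fun r => S r s)) :=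
    ContDiff.differentiable_iteratedDeriv' J ((hsmooth s).of_le (by exact_mod_cast le_top))
  have h := (hdiff x).hasDerivAt
  rw [show fd S (J+1) s x = deriv (iteratedDeriv J (fun r => S r s)) x by
    rw [fd, iteratedDeriv_succ]]
  exact h

theorem g_succ (hsmooth : ∀ s : ℂ, ContDiff ℝ (⊤ : ℕ∞) (fun r => S r s))
    (hcont : ∀ j : ℕ, Continuous (fun p : ℝ × ℂ => iteratedDeriv j (fun r => S r p.2) p.1))
    {c b : ℝ} (hcS : ∀ s : ℂ, ∀ r : ℝ, c ≤ r → S r s = 0) (hcb : c < b) (hb : 0 < b)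
    (J : ℕ) {s : ℂ} (hs : -(n:ℝ) - (J:ℝ) < s.re) :
    g S n b (J+1) s = -(s + n + J) * g S n b J s := by
  set w : ℂ := s + n + J with hw'
  have hwre : 0 < w.re := by
    rw [hw']
    simp only [Complex.add_re, Complex.natCast_re]
    linarith
  have hw0 : w ≠ 0 := fun h => by rw [h] at hwre; simp at hwre
  have hfdc : ∀ k, Continuous (fd S k s) := fun k => fd_cont S hcont k s
  set Φ : ℝ → ℂ := fun x => (x:ℂ) ^ w / w * fd S J s x with hΦ'
  set Φ' : ℝ → ℂ := fun x => (x:ℂ) ^ (w-1) * fd S J s x + (x:ℂ) ^ w / w * fd S (J+1) s x with hΦ''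
  have hΦcont : ContinuousOn Φ (Set.Icc 0 b) :=
    (((Complex.continuous_ofReal_cpow_const hwre).div_const w).mul (hfdc J)).continuousOn
  have hΦderiv : ∀ x ∈ Set.Ioo (0:ℝ) b, HasDerivAt Φ (Φ' x) x := by
    intro x hx
    have h1 : HasDerivAt (fun y : ℝ => (y:ℂ) ^ w / w) ((x:ℂ) ^ (w-1)) x := by
      have h2 := hasDerivAt_ofReal_cpow_const' hx.1.ne' (r := w - 1)
        (by intro h; exact hw0 (by linear_combination h))
      have h3 : w - 1 + 1 = w := by ring
      simpa only [h3] using h2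
    exact h1.mul (hasDerivAt_fd S hsmooth J s x)
  have hint1 : IntegrableOn (fun x : ℝ => (x:ℂ) ^ (w-1) * fd S J s x) (Set.Ioc 0 b) :=
    integrable_cpow_mul hb (by rw [Complex.sub_re, Complex.one_re]; linarith) (hfdc J)
  have hint2 : IntegrableOn (fun x : ℝ => (x:ℂ) ^ w / w * fd S (J+1) s x) (Set.Ioc 0 b) := by
    refine ((integrable_cpow_mul hb (by linarith) (hfdc (J+1))).div_const w).congr ?_
    exact Eventually.of_forall fun x => by ring
  have hint : IntervalIntegrable Φ' volume 0 b := by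
    rw [intervalIntegrable_iff_integrableOn_Ioc_of_le hb.le]
    exact hint1.add hint2
  have key := intervalIntegral.integral_eq_sub_of_hasDeriv_right_of_le hb.le hΦcont
    (fun x hx => (hΦderiv x hx).hasDerivWithinAt) hint
  have hΦb : Φ b = 0 := by rw [hΦ']; simp [fd_vanish S hcS J s hcb]
  have hΦ0 : Φ 0 = 0 := by
    rw [hΦ']
    simp only [Complex.ofReal_zero, Complex.zero_cpow hw0, zero_div, zero_mul]
  rw [hΦb, hΦ0, sub_zero, intervalIntegral.integral_of_le hb.le,
    MeasureTheory.integral_add hint1 hint2] at key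
  have hg0 : ∫ x in Set.Ioc (0:ℝ) b, (x:ℂ) ^ (w-1) * fd S J s x = g S n b J s := rfl
  have hg1 : ∫ x in Set.Ioc (0:ℝ) b, (x:ℂ) ^ w / w * fd S (J+1) s x
      = g S n b (J+1) s / w := by
    rw [g, ← integral_div]
    refine setIntegral_congr_fun measurableSet_Ioc fun x _ => ?_
    have : s + n + ((J:ℕ)+1 : ℕ) - 1 = w := by push_cast; rw [hw']; ring
    rw [this]
    ring
  rw [hg0, hg1] at key
  field_simp at key
  linear_combination key

theorem g_eval (hsmooth : ∀ s : ℂ, ContDiff ℝ (⊤ : ℕ∞) (fun r => S r s))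
    (hcont : ∀ j : ℕ, Continuous (fun p : ℝ × ℂ => iteratedDeriv j (fun r => S r p.2) p.1))
    {c b : ℝ} (hcS : ∀ s : ℂ, ∀ r : ℝ, c ≤ r → S r s = 0) (hcb : c < b) (hb : 0 < b)
    (j : ℕ) : g S n b (j+1) (-(n:ℂ) - j) = - fd S j (-(n:ℂ) - j) 0 := by
  set aa : ℂ := -(n:ℂ) - j with haa'
  have hexp : aa + n + ((j:ℕ)+1 : ℕ) - 1 = 0 := by push_cast; rw [haa']; ring
  have h1 : g S n b (j+1) aa = ∫ x in Set.Ioc (0:ℝ) b, fd S (j+1) aa x := by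
    rw [g]
    refine setIntegral_congr_fun measurableSet_Ioc fun x _ => ?_
    rw [hexp, Complex.cpow_zero, one_mul]
  have h2 : ∫ x in Set.Ioc (0:ℝ) b, fd S (j+1) aa x
      = ∫ x in (0:ℝ)..b, fd S (j+1) aa x := (intervalIntegral.integral_of_le hb.le).symm
  have h3 : ∫ x in (0:ℝ)..b, fd S (j+1) aa x = fd S j aa b - fd S j aa 0 := by
    refine intervalIntegral.integral_eq_sub_of_hasDerivAt
      (fun x _ => hasDerivAt_fd S hsmooth j aa x) ?_
    exact (fd_cont S hcont (j+1) aa).intervalIntegrable 0 b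
  rw [h1, h2, h3, fd_vanish S hcS j aa hcb, zero_sub]

theorem g_zero_eq
    (hcont : ∀ j : ℕ, Continuous (fun p : ℝ × ℂ => iteratedDeriv j (fun r => S r p.2) p.1))
    {c b : ℝ} (hcS : ∀ s : ℂ, ∀ r : ℝ, c ≤ r → S r s = 0) (hcb : c < b) (hc0 : 0 < c)
    {s : ℂ} (hs : -(n:ℝ) < s.re) :
    g S n b 0 s = ∫ r in Set.Ioi (0:ℝ), (r:ℂ) ^ (s + n - 1) * S r s := by
  have hb : 0 < b := hc0.trans hcb
  have hfd0 : ∀ r : ℝ, fd S 0 s r = S r s := fun r => by rw [fd, iteratedDeriv_zero]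
  have hScont : Continuous (fun r : ℝ => S r s) := by
    have := fd_cont S hcont 0 s
    simpa only [funext hfd0] using this
  have hre : (-1:ℝ) < (s + n - 1).re := by
    simp only [Complex.sub_re, Complex.add_re, Complex.one_re, Complex.natCast_re]
    linarith
  have hint1 : IntegrableOn (fun r : ℝ => (r:ℂ) ^ (s + n - 1) * S r s) (Set.Ioc 0 b) :=
    integrable_cpow_mul hb hre hScont
  have hint2 : IntegrableOn (fun r : ℝ => (r:ℂ) ^ (s + n - 1) * S r s) (Set.Ioi b) := by
    refine (integrableOn_congr_fun (f := fun _ => (0:ℂ)) ?_ measurableSet_Ioi).mp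
      (integrableOn_zero)
    intro r hr
    show (0:ℂ) = (r:ℂ) ^ (s + n - 1) * S r s
    rw [hcS s r (hcb.le.trans (le_of_lt hr)), mul_zero]
  rw [show Set.Ioi (0:ℝ) = Set.Ioc 0 b ∪ Set.Ioi b from (Set.Ioc_union_Ioi_eq_Ioi hb.le).symm,
    setIntegral_union (Set.Ioc_disjoint_Ioi le_rfl) measurableSet_Ioi hint1 hint2]
  have h2 : ∫ r in Set.Ioi b, (r:ℂ) ^ (s + n - 1) * S r s = 0 :=
    setIntegral_eq_zero_of_forall_eq_zero fun r hr => by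
      rw [hcS s r (hcb.le.trans (le_of_lt hr)), mul_zero]
  rw [h2, add_zero, g]
  refine setIntegral_congr_fun measurableSet_Ioc fun x _ => ?_
  rw [hfd0]
  norm_num

theorem prod_eval (j : ℕ) : (∏ i ∈ Finset.range j, ((i:ℂ) - j)) = (-1)^j * j.factorial := by
  rw [← Finset.prod_range_reflect]
  have h1 : ∀ i ∈ Finset.range j, ((↑(j - 1 - i):ℂ) - j) = -1 * ((i:ℂ)+1) := by
    intro i hi
    have hij : i < j := Finset.mem_range.mp hi
    have h2 : ((j - 1 - i:ℕ):ℂ) = (j:ℂ) - 1 - i := by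
      have h3 : j - 1 - i + 1 + i = j := by omega
      have := congrArg (fun m : ℕ => (m:ℂ)) h3
      push_cast at this
      linear_combination this
    rw [h2]; ring
  rw [Finset.prod_congr rfl h1, Finset.prod_mul_distrib, Finset.prod_const]
  congr 1
  · rw [Finset.card_range]
  · rw [← Finset.prod_range_add_one_eq_factorial j, Nat.cast_prod]
    push_cast
    rfl

theorem P_eval (j : ℕ) : P n j (-(n:ℂ) - j) = (-1)^j * j.factorial := by
  rw [P, ← prod_eval j]
  exact Finset.prod_congr rfl fun i _ => by push_cast; ring

theorem P_analytic (J : ℕ) (s : ℂ) : AnalyticAt ℂ (fun z => P n J z) s := by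
  induction J with
  | zero => simpa [P] using analyticAt_const
  | succ K ih =>
    have h : (fun z => P n (K+1) z) = fun z => P n K z * (z + n + K) := by
      funext z; exact Finset.prod_range_succ _ _
    rw [h]
    exact ih.mul (((analyticAt_id).add analyticAt_const).add analyticAt_const)



variable (S : ℝ → ℂ → ℂ) (n : ℕ)

theorem g_analyticAt
    (hcont : ∀ j : ℕ, Continuous (fun p : ℝ × ℂ => iteratedDeriv j (fun r => S r p.2) p.1))
    (hentire : ∀ j : ℕ, ∀ r : ℝ, ∀ s : ℂ,
      AnalyticAt ℂ (fun z => iteratedDeriv j (fun r' => S r' z) r) s)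
    {b : ℝ} (hb : 0 < b) (J : ℕ) {s₀ : ℂ}
    (hs₀ : -(n:ℝ) - (J:ℝ) < s₀.re) : AnalyticAt ℂ (g S n b J) s₀ := by
  have hU : IsOpen {z : ℂ | -(n:ℝ) - (J:ℝ) < z.re} :=
    isOpen_lt continuous_const Complex.continuous_re
  exact DifferentiableOn.analyticAt
    (fun z hz => (g_differentiableAt S n hcont hentire hb J hz).differentiableWithinAt)
    (hU.mem_nhds hs₀)

theorem consistency (hsmooth : ∀ s : ℂ, ContDiff ℝ (⊤ : ℕ∞) (fun r => S r s))
    (hcont : ∀ j : ℕ, Continuous (fun p : ℝ × ℂ => iteratedDeriv j (fun r => S r p.2) p.1))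
    {c b : ℝ} (hcS : ∀ s : ℂ, ∀ r : ℝ, c ≤ r → S r s = 0) (hcb : c < b) (hb : 0 < b)
    (J K : ℕ) (hJK : J ≤ K) {s : ℂ} (hs : -(n:ℝ) - (J:ℝ) < s.re)
    (hne : ∀ i : ℕ, J ≤ i → i < K → s + n + i ≠ 0) :
    (-1)^K * g S n b K s / P n K s = (-1)^J * g S n b J s / P n J s := by
  induction K with
  | zero =>
    have hJ0 : J = 0 := Nat.le_zero.mp hJK
    subst hJ0; rfl
  | succ K ih =>
    rcases eq_or_lt_of_le hJK with h | h
    · subst h; rfl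
    have hJK' : J ≤ K := Nat.lt_succ_iff.mp h
    have hK : -(n:ℝ) - (K:ℝ) < s.re := by
      have : (J:ℝ) ≤ K := Nat.cast_le.mpr hJK'
      linarith
    have hgs := g_succ S n hsmooth hcont hcS hcb hb K hK
    have hPs : P n (K+1) s = P n K s * (s + n + K) := Finset.prod_range_succ _ _
    have hu : s + n + (K:ℂ) ≠ 0 := hne K hJK' (Nat.lt_succ_self K)
    have hih := ih hJK' (fun i hi1 hi2 => hne i hi1 (hi2.trans (Nat.lt_succ_self K)))
    calc (-1)^(K+1) * g S n b (K+1) s / P n (K+1) s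
        = ((-1)^K * g S n b K s) * (s + n + K) / (P n K s * (s + n + K)) := by
          rw [hgs, hPs]; push_cast; ring_nf
      _ = (-1)^K * g S n b K s / P n K s := by
          rw [mul_div_mul_right _ _ hu]
      _ = (-1)^J * g S n b J s / P n J s := hih
end MellinCont

open MellinCont in
/-- Mellin-type continuation: if `r ↦ S(r,s)` is smooth, compactly supported in `r` within
`[0,δ)`, and `S` and all its `r`-derivatives are entire in `s` and jointly continuous, then
for `n ≥ 1` the function `F(s) = ∫₀^∞ r^{s+n−1} S(r,s) dr` (defined for `Re s > −n`) extends
meromorphically to `ℂ` with only simple poles at `s = −n−j` (`j ∈ ℕ`) with residue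
`(1/j!) ∂ʲS/∂rʲ(0, −n−j)`. -/
theorem mellin_meromorphic_continuation
    (n : ℕ) (hn : 1 ≤ n) (δ : ℝ) (hδ : 0 < δ) (S : ℝ → ℂ → ℂ)
    (hsmooth : ∀ s : ℂ, ContDiff ℝ (⊤ : ℕ∞) (fun r => S r s))
    (hsupp : ∃ c : ℝ, 0 < c ∧ c < δ ∧ ∀ s : ℂ, ∀ r : ℝ, c ≤ r → S r s = 0)
    (hcont : ∀ j : ℕ, Continuous (fun p : ℝ × ℂ => iteratedDeriv j (fun r => S r p.2) p.1))
    (hentire : ∀ j : ℕ, ∀ r : ℝ, ∀ s : ℂ,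
      AnalyticAt ℂ (fun z => iteratedDeriv j (fun r' => S r' z) r) s) :
    ∃ F : ℂ → ℂ,
      (∀ s : ℂ, -(n : ℝ) < s.re →
        F s = ∫ r in Set.Ioi (0 : ℝ), (r : ℂ) ^ (s + n - 1) * S r s) ∧
      (∀ s : ℂ, (∀ j : ℕ, s ≠ -(n : ℂ) - j) → AnalyticAt ℂ F s) ∧
      (∀ j : ℕ, ∃ G : ℂ → ℂ, AnalyticAt ℂ G (-(n : ℂ) - j) ∧
        ∀ᶠ s in nhdsWithin (-(n : ℂ) - j) {(-(n : ℂ) - j)}ᶜ,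
          F s = ((1 / (j.factorial : ℂ)) • iteratedDeriv j (fun r => S r (-(n : ℂ) - j)) 0)
              / (s + n + j) + G s) := by
  obtain ⟨c, hc0, hcδ, hcS⟩ := hsupp
  set b : ℝ := c + 1 with hb'
  have hcb : c < b := by rw [hb']; linarith
  have hb : 0 < b := hc0.trans hcb
  set Jc : ℂ → ℕ := fun s => ⌈max 0 (-(s.re) - n)⌉₊ + 1 with hJc'
  have hJc : ∀ s : ℂ, -(n:ℝ) - (Jc s : ℝ) < s.re := by
    intro s
    have h1 : -(s.re) - n ≤ max 0 (-(s.re) - n) := le_max_right _ _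
    have h2 : max 0 (-(s.re) - n) ≤ (⌈max 0 (-(s.re) - n)⌉₊ : ℝ) := Nat.le_ceil _
    have h3 : (Jc s : ℝ) = (⌈max 0 (-(s.re) - n)⌉₊ : ℝ) + 1 := by rw [hJc']; push_cast; ring
    rw [h3]; linarith
  set Ft : ℕ → ℂ → ℂ := fun J s => (-1)^J * g S n b J s / P n J s with hFt'
  set F : ℂ → ℂ := fun s => Ft (Jc s) s with hF'
  have hcons : ∀ (J K : ℕ), J ≤ K → ∀ s : ℂ, -(n:ℝ) - (J:ℝ) < s.re →
      (∀ i : ℕ, J ≤ i → i < K → s + n + i ≠ 0) → Ft K s = Ft J s :=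
    fun J K hJK s hs hne => consistency S n hsmooth hcont hcS hcb hb J K hJK hs hne
  -- key: small distance to -(n)-j pole forces index equality
  have hfar : ∀ (j i : ℕ) (s : ℂ), dist s (-(n:ℂ) - j) < 1/2 → s ≠ -(n:ℂ) - j →
      s + n + i ≠ 0 := by
    intro j i s hdist hne h
    have hsv : s = -(n:ℂ) - i := by linear_combination h
    have hij : i ≠ j := fun hij => hne (by rw [hsv, hij])
    rw [hsv] at hdist
    have : dist (-(n:ℂ) - (i:ℂ)) (-(n:ℂ) - (j:ℂ)) = ‖(j:ℂ) - (i:ℂ)‖ := by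
      rw [dist_eq_norm]; congr 1; ring
    rw [this] at hdist
    have h1 : ((j:ℂ) - (i:ℂ)) = (((j:ℝ) - (i:ℝ) : ℝ) : ℂ) := by push_cast; ring
    rw [h1, Complex.norm_real, Real.norm_eq_abs] at hdist
    have h2 : (1:ℝ) ≤ |(j:ℝ) - (i:ℝ)| := by
      have h3 : ((j:ℤ) - (i:ℤ)) ≠ 0 := sub_ne_zero.mpr (by exact_mod_cast hij.symm)
      have h4 : (1:ℤ) ≤ |(j:ℤ) - (i:ℤ)| := Int.one_le_abs h3
      have h5 : ((1:ℤ):ℝ) ≤ ((|(j:ℤ) - (i:ℤ)| : ℤ) : ℝ) := Int.cast_le.mpr h4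
      rw [Int.cast_abs] at h5
      push_cast at h5
      linarith
    linarith
  refine ⟨F, ?_, ?_, ?_⟩
  · -- agreement with the integral
    intro s hs
    have h0 : -(n:ℝ) - ((0:ℕ):ℝ) < s.re := by push_cast; linarith
    have h1 : F s = Ft 0 s := by
      rw [hF']
      refine hcons 0 (Jc s) (Nat.zero_le _) s h0 ?_
      intro i _ _ h
      have := congrArg Complex.re h
      simp only [Complex.add_re, Complex.natCast_re, Complex.zero_re] at this
      linarith
    rw [h1]
    have hP0 : P n 0 s = 1 := Finset.prod_range_zero _
    show (-1:ℂ)^(0:ℕ) * g S n b 0 s / P n 0 s = _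
    rw [hP0, pow_zero, one_mul, div_one]
    exact g_zero_eq S n hcont hcS hcb hc0 hs
  · -- analyticity away from poles
    intro s₀ hs₀
    set K : ℕ := ⌈max 0 (-(s₀.re) - n + 1)⌉₊ + 1 with hK'
    have hK1 : ∀ z : ℂ, dist z s₀ < 1 → Jc z ≤ K := by
      intro z hz
      have hre : |z.re - s₀.re| < 1 := by
        calc |z.re - s₀.re| = |(z - s₀).re| := by rw [Complex.sub_re]
          _ ≤ ‖z - s₀‖ := Complex.abs_re_le_norm _
          _ < 1 := by rwa [← dist_eq_norm]
      have h1 : -(z.re) - n ≤ -(s₀.re) - n + 1 := by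
        have := abs_lt.mp hre; linarith [this.1]
      simp only [hJc', hK']
      have : ⌈max 0 (-(z.re) - n)⌉₊ ≤ ⌈max 0 (-(s₀.re) - n + 1)⌉₊ :=
        Nat.ceil_le_ceil (max_le_max le_rfl h1)
      omega
    have hKz : ∀ z : ℂ, dist z s₀ < 1 → -(n:ℝ) - (K:ℝ) < z.re := by
      intro z hz
      have h1 := hJc z
      have h2 : (Jc z : ℝ) ≤ (K : ℝ) := Nat.cast_le.mpr (hK1 z hz)
      linarith
    have hKs₀ : -(n:ℝ) - (K:ℝ) < s₀.re := hKz s₀ (by simpa using one_pos)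
    have hPne : P n K s₀ ≠ 0 := by
      rw [P]
      refine Finset.prod_ne_zero_iff.mpr fun i _ h => hs₀ i (by linear_combination h)
    have hgan : AnalyticAt ℂ (g S n b K) s₀ := g_analyticAt S n hcont hentire hb K hKs₀
    have hFtK : AnalyticAt ℂ (fun z => Ft K z) s₀ := by
      rw [hFt']
      exact (analyticAt_const.mul hgan).div (P_analytic n K s₀) hPne
    have hev : (fun z => Ft K z) =ᶠ[𝓝 s₀] F := by
      have h1 : ∀ᶠ z in 𝓝 s₀, P n K z ≠ 0 :=
        (P_analytic n K s₀).continuousAt.eventually_ne hPne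
      have h2 : ∀ᶠ z in 𝓝 s₀, dist z s₀ < 1 :=
        eventually_nhds_iff.mpr ⟨ball s₀ 1, fun y hy => mem_ball.mp hy,
          isOpen_ball, mem_ball_self one_pos⟩
      filter_upwards [h1, h2] with z hz1 hz2
      exact hcons (Jc z) K (hK1 z hz2) z (hJc z) fun i hi1 hi2 h =>
        hz1 (by rw [P]; exact Finset.prod_eq_zero (Finset.mem_range.mpr hi2) h)
    exact hFtK.congr hev
  · -- pole structure
    intro j
    set aa : ℂ := -(n:ℂ) - j with haa'
    have haare : aa.re = -(n:ℝ) - j := by rw [haa']; simp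
    have hga : -(n:ℝ) - ((j+1:ℕ):ℝ) < aa.re := by rw [haare]; push_cast; linarith
    have hgan : AnalyticAt ℂ (g S n b (j+1)) aa := g_analyticAt S n hcont hentire hb (j+1) hga
    have hPa : P n j aa ≠ 0 := by
      rw [P]
      refine Finset.prod_ne_zero_iff.mpr fun i hi h => ?_
      have hij : i < j := Finset.mem_range.mp hi
      have hcast : (i:ℂ) = (j:ℂ) := by linear_combination h - haa'
      exact absurd (Nat.cast_inj.mp hcast) (by omega)
    set H : ℂ → ℂ := fun s => (-1)^(j+1) * g S n b (j+1) s / P n j s with hH'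
    have hHa : AnalyticAt ℂ H aa :=
      (analyticAt_const.mul hgan).div (P_analytic n j aa) hPa
    obtain ⟨p, hp⟩ := hHa
    have hds : AnalyticAt ℂ (dslope H aa) aa := ⟨p.fslope, hp.has_fpower_series_dslope_fslope⟩
    refine ⟨dslope H aa, hds, ?_⟩
    have hHval : H aa = (1 / (j.factorial : ℂ)) • iteratedDeriv j (fun r => S r aa) 0 := by
      rw [hH']
      simp only [haa']
      rw [g_eval S n hsmooth hcont hcS hcb hb j, P_eval n j]
      rw [smul_eq_mul]
      have hfact : ((j.factorial : ℕ):ℂ) ≠ 0 := Nat.cast_ne_zero.mpr (Nat.factorial_ne_zero j)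
      have hneg : ((-1:ℂ))^j ≠ 0 := pow_ne_zero j (by norm_num)
      simp only [fd]
      field_simp
      ring
    have hev1 : ∀ᶠ s in nhdsWithin aa {aa}ᶜ, dist s aa < 1/2 :=
      Filter.Eventually.filter_mono nhdsWithin_le_nhds
        (eventually_nhds_iff.mpr ⟨ball aa (1/2), fun y hy => mem_ball.mp hy,
          isOpen_ball, mem_ball_self (by norm_num)⟩)
    filter_upwards [hev1, eventually_mem_nhdsWithin] with s hdist hsmem
    have hsne' : s ≠ aa := hsmem
    have hfars : ∀ i : ℕ, s + n + i ≠ 0 := fun i =>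
      hfar j i s (by rwa [← haa']) (by rwa [← haa'])
    have hsre : -(n:ℝ) - ((j+1:ℕ):ℝ) < s.re := by
      have h1 : |(s - aa).re| ≤ dist s aa :=
        (Complex.abs_re_le_norm _).trans_eq (by rw [dist_eq_norm])
      have h2 : (s - aa).re = s.re - aa.re := Complex.sub_re _ _
      rw [h2, haare] at h1
      have h3 := (abs_lt.mp (h1.trans_lt hdist)).1
      push_cast
      linarith
    have e1 : Ft (max (Jc s) (j+1)) s = Ft (Jc s) s :=
      hcons (Jc s) _ (le_max_left _ _) s (hJc s) (fun i _ _ => hfars i)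
    have e2 : Ft (max (Jc s) (j+1)) s = Ft (j+1) s :=
      hcons (j+1) _ (le_max_right _ _) s hsre (fun i _ _ => hfars i)
    have hFs : F s = Ft (j+1) s := by
      show Ft (Jc s) s = Ft (j+1) s
      rw [← e1, e2]
    rw [hFs]
    have hPs : P n (j+1) s = P n j s * (s + n + (j:ℂ)) := Finset.prod_range_succ _ _
    have hsa : s - aa = s + n + j := by rw [haa']; ring
    have hsa0 : s - aa ≠ 0 := sub_ne_zero.mpr hsne'
    have hH2 : Ft (j+1) s = H s / (s + n + j) := by
      simp only [hFt', hH']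
      rw [hPs, ← div_div]
    rw [hH2, ← hHval, ← hsa]
    rw [dslope_of_ne H hsne', slope_def_field]
    field_simp
    ring
end

section
/- Let M be a compact smooth n-dimensional submanifold of ℝ^d, u ∈ M, and φ a smooth function on ℝ^d. Then the coaxial derivative Δ∘_u φ = Σ_j X_j² φ(u) (sum over an orthonormal basis X_1,…,X_{d−n} of the normal space ν_u, with X_j extended as constant vector fields) satisfies Δ∘_u φ = Δφ(u) − Δ_M(φ|_M)(u) + ⟨H(u), ∇φ(u)⟩, where Δ is the Euclidean Laplacian, Δ_M is the Laplace–Beltrami operator of M, and H is the mean curvature vector of M. -/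
open RealInnerProductSpace

/-- The Euclidean Laplacian (sum of second partial derivatives). -/
noncomputable def euclideanLaplacian {d : ℕ} (φ : EuclideanSpace ℝ (Fin d) → ℝ)
    (x : EuclideanSpace ℝ (Fin d)) : ℝ :=
  ∑ i : Fin d, fderiv ℝ (fun y => fderiv ℝ φ y (EuclideanSpace.single i 1)) x
    (EuclideanSpace.single i 1)

section Helpers

variable {E : Type*} [NormedAddCommGroup E] [InnerProductSpace ℝ E]

/-- Derivative of `y ↦ fderiv f y v` in terms of the second derivative. -/
lemma fderiv_fderiv_apply_const {F : Type*} [NormedAddCommGroup F] [NormedSpace ℝ F]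
    (f : E → F) (hf : ContDiff ℝ (⊤ : ℕ∞) f) (x v w : E) :
    fderiv ℝ (fun y => fderiv ℝ f y v) x w = fderiv ℝ (fderiv ℝ f) x w v := by
  have hc : DifferentiableAt ℝ (fderiv ℝ f) x :=
    ((hf.fderiv_right (m := (⊤ : ℕ∞)) (by simp)).differentiable (by simp)) x
  have := fderiv_clm_apply (𝕜 := ℝ) (c := fderiv ℝ f) (u := fun _ => v) hc
    (differentiableAt_const v)
  rw [this]
  simp

/-- The trace of a bilinear form over an orthonormal basis is basis independent. -/
lemma sum_bilin_orthonormalBasis {ι κ : Type*} [Fintype ι] [Fintype κ] [DecidableEq κ]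
    (b : OrthonormalBasis ι ℝ E) (c : OrthonormalBasis κ ℝ E) (B : E →L[ℝ] E →L[ℝ] ℝ) :
    ∑ k, B (b k) (b k) = ∑ i, B (c i) (c i) := by
  have expand : ∀ k, B (b k) (b k) =
      ∑ i, ∑ j, ⟪c i, b k⟫ * ⟪c j, b k⟫ * B (c j) (c i) := by
    intro k
    conv_lhs => rw [← c.sum_repr' (b k)]
    rw [map_sum]
    simp only [ContinuousLinearMap.coe_sum', Finset.sum_apply, map_smul,
      ContinuousLinearMap.coe_smul', Pi.smul_apply, map_sum, smul_eq_mul,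
      Finset.mul_sum]
    exact Finset.sum_congr rfl fun i _ => Finset.sum_congr rfl fun j _ => by ring
  simp only [expand]
  rw [Finset.sum_comm]
  have : ∀ i, ∑ k, ∑ j, ⟪c i, b k⟫ * ⟪c j, b k⟫ * B (c j) (c i)
      = ∑ j, (∑ k, ⟪c i, b k⟫ * ⟪b k, c j⟫) * B (c j) (c i) := by
    intro i
    rw [Finset.sum_comm]
    refine Finset.sum_congr rfl fun j _ => ?_
    rw [Finset.sum_mul]
    refine Finset.sum_congr rfl fun k _ => ?_
    rw [real_inner_comm (c j) (b k)]
  simp only [this, b.sum_inner_mul_inner]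
  have horth := orthonormal_iff_ite.mp c.orthonormal
  refine Finset.sum_congr rfl fun i _ => ?_
  simp [horth]

end Helpers

/-- Let `M ⊆ ℝ^d` be an `n`-dimensional submanifold, parametrized near `u = ψ(0)` by a
smooth map `ψ : ℝ^n → ℝ^d` in geodesic normal coordinates at `0` (the tangent vectors
`Yᵢ = ∂ᵢψ(0)` are orthonormal and the first derivatives of the induced metric vanish
at `0`).  Then the coaxial derivative `Δ∘_u φ = Σ_j X_j²φ(u)` (over an orthonormal basis
`X_j` of the normal space `ν = (T_uM)^⊥`) satisfies
`Δ∘_u φ = Δφ(u) − Δ_M(φ|_M)(u) + ⟨H(u), ∇φ(u)⟩`, where in normal coordinates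
`Δ_M(φ|_M)(u) = Σᵢ ∂ᵢ²(φ∘ψ)(0)` is the Laplace–Beltrami operator of `M` and
`H(u) = Σᵢ (∂ᵢ²ψ(0))^⊥` is the mean curvature vector of `M` at `u`. -/
theorem coaxial_eq_laplacian_sub_laplaceBeltrami_add_meanCurvature
    (d n : ℕ) (hn : n ≤ d)
    (φ : EuclideanSpace ℝ (Fin d) → ℝ) (hφ : ContDiff ℝ (⊤ : ℕ∞) φ)
    (u : EuclideanSpace ℝ (Fin d))
    (ψ : EuclideanSpace ℝ (Fin n) → EuclideanSpace ℝ (Fin d))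
    (hψ : ContDiff ℝ (⊤ : ℕ∞) ψ) (hψ0 : ψ 0 = u)
    (Y : Fin n → EuclideanSpace ℝ (Fin d))
    (hY : Y = fun i => fderiv ℝ ψ 0 (EuclideanSpace.single i 1))
    (hortho : Orthonormal ℝ Y)
    (hnormalcoord : ∀ k i j : Fin n,
      fderiv ℝ (fun x => (⟪fderiv ℝ ψ x (EuclideanSpace.single i 1),
        fderiv ℝ ψ x (EuclideanSpace.single j 1)⟫ : ℝ)) 0 (EuclideanSpace.single k 1) = 0)
    (ν : Submodule ℝ (EuclideanSpace ℝ (Fin d)))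
    (hν : ν = (Submodule.span ℝ (Set.range Y))ᗮ)
    (X : Fin (d - n) → EuclideanSpace ℝ (Fin d))
    (hXmem : ∀ j, X j ∈ ν) (hXon : Orthonormal ℝ X)
    (hXspan : Submodule.span ℝ (Set.range X) = ν)
    (H : EuclideanSpace ℝ (Fin d))
    (hH : H = ∑ i : Fin n,
      (ν.orthogonalProjection
        (fderiv ℝ (fun x => fderiv ℝ ψ x (EuclideanSpace.single i 1)) 0
          (EuclideanSpace.single i 1)) : EuclideanSpace ℝ (Fin d))) :
    (∑ j : Fin (d - n), fderiv ℝ (fun y => fderiv ℝ φ y (X j)) u (X j)) =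
      euclideanLaplacian φ u -
        (∑ i : Fin n, fderiv ℝ (fun x => fderiv ℝ (φ ∘ ψ) x (EuclideanSpace.single i 1)) 0
          (EuclideanSpace.single i 1)) +
        ⟪H, gradient φ u⟫ := by
  classical
  have hφdiff : Differentiable ℝ φ := hφ.differentiable (by simp)
  have hφ' : ContDiff ℝ (⊤ : ℕ∞) (fderiv ℝ φ) := hφ.fderiv_right (by simp)
  have hψdiff : Differentiable ℝ ψ := hψ.differentiable (by simp)
  have hψ' : ContDiff ℝ (⊤ : ℕ∞) (fderiv ℝ ψ) := hψ.fderiv_right (by simp)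
  set B : EuclideanSpace ℝ (Fin d) →L[ℝ] EuclideanSpace ℝ (Fin d) →L[ℝ] ℝ :=
    fderiv ℝ (fderiv ℝ φ) u with hBdef
  have hB : ∀ v w : EuclideanSpace ℝ (Fin d),
      fderiv ℝ (fun y => fderiv ℝ φ y v) u w = B w v :=
    fun v w => fderiv_fderiv_apply_const φ hφ u v w
  -- second derivatives of ψ at 0
  set S : Fin n → Fin n → EuclideanSpace ℝ (Fin d) := fun k i =>
    fderiv ℝ (fun x => fderiv ℝ ψ x (EuclideanSpace.single i 1)) 0
      (EuclideanSpace.single k 1) with hSdef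
  have hS : ∀ k i, fderiv ℝ (fun x => fderiv ℝ ψ x (EuclideanSpace.single i 1)) 0
      (EuclideanSpace.single k 1) = S k i := fun k i => by rw [hSdef]
  have hSsymm : ∀ k i, S k i = S i k := by
    intro k i
    rw [← hS, ← hS, fderiv_fderiv_apply_const ψ hψ, fderiv_fderiv_apply_const ψ hψ]
    exact second_derivative_symmetric (fun y => (hψdiff y).hasFDerivAt)
      ((hψ'.differentiable (by simp) 0).hasFDerivAt) _ _
  have hfdiff : ∀ i : Fin n, DifferentiableAt ℝ
      (fun x => fderiv ℝ ψ x (EuclideanSpace.single i 1)) 0 :=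
    fun i => ((hψ'.differentiable (by simp)) 0).clm_apply (differentiableAt_const _)
  -- the first-order normal coordinate relations
  have hA : ∀ k i j : Fin n, ⟪S k j, Y i⟫ + ⟪S k i, Y j⟫ = 0 := by
    intro k i j
    have h := hnormalcoord k i j
    rw [fderiv_inner_apply ℝ (hfdiff i) (hfdiff j)] at h
    rw [hS, hS] at h
    have hYi : (fderiv ℝ ψ 0) (EuclideanSpace.single i 1) = Y i := by rw [hY]
    have hYj : (fderiv ℝ ψ 0) (EuclideanSpace.single j 1) = Y j := by rw [hY]
    rw [hYi, hYj] at h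
    have hc := real_inner_comm (Y i) (S k j)
    linarith
  have hSnormal : ∀ i j : Fin n, ⟪Y j, S i i⟫ = 0 := by
    intro i j
    have h0 : ⟪S j i, Y i⟫ = 0 := by
      have := hA j i i; linarith
    have h1 := hA i i j
    -- ⟪S i j, Y i⟫ + ⟪S i i, Y j⟫ = 0
    rw [hSsymm i j] at h1
    rw [real_inner_comm]
    linarith
  have hSmem : ∀ i, S i i ∈ ν := by
    intro i
    rw [hν, Submodule.mem_orthogonal]
    intro v hv
    induction hv using Submodule.span_induction with
    | mem v hv => obtain ⟨j, rfl⟩ := hv; exact hSnormal i j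
    | zero => simp
    | add x y hx hy ihx ihy => simp [inner_add_left, ihx, ihy]
    | smul a x hx ihx => simp [inner_smul_left, ihx]
  have hHS : H = ∑ i, S i i := by
    rw [hH]
    refine Finset.sum_congr rfl fun i _ => ?_
    rw [hS]; exact (Submodule.starProjection_eq_self_iff (K := ν)).mpr (hSmem i)
  -- Laplace–Beltrami term
  have hLB : ∀ i : Fin n,
      fderiv ℝ (fun x => fderiv ℝ (φ ∘ ψ) x (EuclideanSpace.single i 1)) 0
        (EuclideanSpace.single i 1) = B (Y i) (Y i) + fderiv ℝ φ u (S i i) := by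
    intro i
    have hfun : (fun x => fderiv ℝ (φ ∘ ψ) x (EuclideanSpace.single i 1))
        = fun x => fderiv ℝ φ (ψ x) (fderiv ℝ ψ x (EuclideanSpace.single i 1)) := by
      funext x
      rw [fderiv_comp x (hφdiff (ψ x)) (hψdiff x)]
      rfl
    rw [hfun]
    have hc : DifferentiableAt ℝ (fun x => fderiv ℝ φ (ψ x)) 0 :=
      DifferentiableAt.comp 0 (hφ'.differentiable (by simp) (ψ 0)) (hψdiff 0)
    rw [fderiv_clm_apply hc (hfdiff i)]
    simp only [ContinuousLinearMap.add_apply, ContinuousLinearMap.coe_comp',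
      Function.comp_apply, ContinuousLinearMap.flip_apply]
    have hcomp : fderiv ℝ (fun x => fderiv ℝ φ (ψ x)) 0
        = B.comp (fderiv ℝ ψ 0) := by
      rw [hBdef, ← hψ0]
      exact fderiv_comp 0 (hφ'.differentiable (by simp) (ψ 0)) (hψdiff 0)
    rw [hcomp, hS, hψ0]
    have hYi : (fderiv ℝ ψ 0) (EuclideanSpace.single i 1) = Y i := by rw [hY]
    simp only [ContinuousLinearMap.coe_comp', Function.comp_apply, hYi]
    ring
  -- the combined orthonormal basis
  set Z : Fin n ⊕ Fin (d - n) → EuclideanSpace ℝ (Fin d) := Sum.elim Y X with hZdef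
  have hYX : ∀ a b, ⟪Y a, X b⟫ = 0 := fun a b =>
    Submodule.inner_right_of_mem_orthogonal (Submodule.subset_span (Set.mem_range_self a))
      (hν ▸ hXmem b)
  have honZ : Orthonormal ℝ Z := by
    constructor
    · intro p
      rcases p with a | a
      · exact hortho.1 a
      · exact hXon.1 a
    · intro p q hpq
      rcases p with a | a <;> rcases q with b | b
      · exact hortho.2 (fun e => hpq (by rw [e]))
      · exact hYX a b
      · rw [show Z (Sum.inl b) = Y b from rfl, show Z (Sum.inr a) = X a from rfl,
          real_inner_comm]
        exact hYX b a
      · exact hXon.2 (fun e => hpq (by rw [e]))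
  have hspanZ : Submodule.span ℝ (Set.range Z) = ⊤ := by
    rw [hZdef, Set.Sum.elim_range, Submodule.span_union, hXspan, hν]
    exact Submodule.sup_orthogonal_of_hasOrthogonalProjection
  let bZ : OrthonormalBasis (Fin n ⊕ Fin (d - n)) ℝ (EuclideanSpace ℝ (Fin d)) :=
    OrthonormalBasis.mk honZ (by rw [hspanZ])
  have hbZ : ∀ p, bZ p = Z p := fun p => by simp [bZ, OrthonormalBasis.coe_mk]
  -- decompose the Euclidean Laplacian
  have hsplit : euclideanLaplacian φ u
      = (∑ i, B (Y i) (Y i)) + ∑ j, B (X j) (X j) := by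
    unfold euclideanLaplacian
    have hstd : ∀ i : Fin d,
        fderiv ℝ (fun y => fderiv ℝ φ y (EuclideanSpace.single i 1)) u
          (EuclideanSpace.single i 1) = B (EuclideanSpace.single i 1)
          (EuclideanSpace.single i 1) := fun i => hB _ _
    simp only [hstd]
    have := sum_bilin_orthonormalBasis bZ (EuclideanSpace.basisFun (Fin d) ℝ) B
    simp only [EuclideanSpace.basisFun_apply, hbZ] at this
    rw [← this, Fintype.sum_sum_type]
    simp [hZdef]
  -- the gradient term
  have hgrad : ⟪H, gradient φ u⟫ = ∑ i, fderiv ℝ φ u (S i i) := by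
    rw [real_inner_comm]
    have : ⟪gradient φ u, H⟫ = fderiv ℝ φ u H := InnerProductSpace.toDual_symm_apply
    rw [this, hHS, map_sum]
  -- conclude
  have hLHS : (∑ j : Fin (d - n), fderiv ℝ (fun y => fderiv ℝ φ y (X j)) u (X j))
      = ∑ j, B (X j) (X j) := Finset.sum_congr rfl fun j _ => hB _ _
  rw [hLHS, hsplit, hgrad]
  simp only [hLB]
  rw [Finset.sum_add_distrib]
  ring
end

section
/- Let f₁, f₂ : (−ε,ε) → ℝ be smooth with Taylor expansions f₁(u) = Σ_{i≥2} a_i u^i, f₂(u) = Σ_{i≥2} b_i u^i up to order 4, and (a₂, b₂) ≠ (0,0). Then the second derivative with respect to arclength of the curvature of the curve u ↦ (u, f₁(u), f₂(u)) at u = 0 equals [√(4b₂²+4a₂²)/(b₂²+a₂²)²]·[(12b₂³+12a₂²b₂)b₄ + 9a₂²b₃² − 18a₂a₃b₂b₃ − 12b₂⁶ − 36a₂²b₂⁴ + (12a₂a₄ + 9a₃² − 36a₂⁴)b₂² + 12a₂³a₄ − 12a₂⁶]. -/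
set_option maxHeartbeats 2000000 in
/-- For the curve `u ↦ (u, f₁(u), f₂(u))` in `ℝ³` with `f₁(u) = a₂u²+a₃u³+a₄u⁴+O(u⁵)`,
`f₂(u) = b₂u²+b₃u³+b₄u⁴+O(u⁵)` and `(a₂,b₂) ≠ (0,0)`, the second derivative of the
curvature with respect to arclength at `u = 0` equals the stated polynomial expression. -/
theorem kappa2_graph_at_zero
    (f₁ f₂ : ℝ → ℝ) (hf₁ : ContDiff ℝ (⊤ : ℕ∞) f₁) (hf₂ : ContDiff ℝ (⊤ : ℕ∞) f₂)
    (h₁0 : f₁ 0 = 0) (h₂0 : f₂ 0 = 0) (h₁1 : deriv f₁ 0 = 0) (h₂1 : deriv f₂ 0 = 0)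
    (a₂ a₃ a₄ b₂ b₃ b₄ : ℝ)
    (ha₂ : a₂ = iteratedDeriv 2 f₁ 0 / 2) (ha₃ : a₃ = iteratedDeriv 3 f₁ 0 / 6)
    (ha₄ : a₄ = iteratedDeriv 4 f₁ 0 / 24)
    (hb₂ : b₂ = iteratedDeriv 2 f₂ 0 / 2) (hb₃ : b₃ = iteratedDeriv 3 f₂ 0 / 6)
    (hb₄ : b₄ = iteratedDeriv 4 f₂ 0 / 24)
    (hab : (a₂, b₂) ≠ (0, 0))
    (γ : ℝ → EuclideanSpace ℝ (Fin 3))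
    (hγ : γ = fun w => (WithLp.equiv 2 (Fin 3 → ℝ)).symm ![w, f₁ w, f₂ w])
    (κ : ℝ → ℝ)
    (hκ : κ = fun w =>
      ‖(WithLp.equiv 2 (Fin 3 → ℝ)).symm
          (crossProduct ((WithLp.equiv 2 (Fin 3 → ℝ)) (deriv γ w))
            ((WithLp.equiv 2 (Fin 3 → ℝ)) (deriv (deriv γ) w)))‖ / ‖deriv γ w‖ ^ 3) :
    deriv (fun w => deriv κ w / ‖deriv γ w‖) 0 / ‖deriv γ 0‖ =
      Real.sqrt (4 * b₂ ^ 2 + 4 * a₂ ^ 2) / (b₂ ^ 2 + a₂ ^ 2) ^ 2 *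
        ((12 * b₂ ^ 3 + 12 * a₂ ^ 2 * b₂) * b₄ + 9 * a₂ ^ 2 * b₃ ^ 2
          - 18 * a₂ * a₃ * b₂ * b₃ - 12 * b₂ ^ 6 - 36 * a₂ ^ 2 * b₂ ^ 4
          + (12 * a₂ * a₄ + 9 * a₃ ^ 2 - 36 * a₂ ^ 4) * b₂ ^ 2
          + 12 * a₂ ^ 3 * a₄ - 12 * a₂ ^ 6) := by
  have hf₁' : ContDiff ℝ (⊤:ℕ∞) f₁ := hf₁.of_le (by simp)
  have hf₂' : ContDiff ℝ (⊤:ℕ∞) f₂ := hf₂.of_le (by simp)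
  have step : ∀ g : ℝ → ℝ, ContDiff ℝ (⊤:ℕ∞) g → ContDiff ℝ (⊤:ℕ∞) (deriv g) :=
    fun g hg => (contDiff_infty_iff_deriv.mp hg).2
  have HD : ∀ (g : ℝ → ℝ), ContDiff ℝ (⊤:ℕ∞) g → ∀ w, HasDerivAt g (deriv g w) w :=
    fun g hg w => (hg.differentiable (by simp) w).hasDerivAt
  set p1 := deriv f₁ with hp1
  set q1 := deriv f₂ with hq1
  set p2 := deriv p1 with hp2
  set q2 := deriv q1 with hq2
  set p3 := deriv p2 with hp3
  set q3 := deriv q2 with hq3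
  set p4 := deriv p3 with hp4
  set q4 := deriv q3 with hq4
  have cp1 : ContDiff ℝ (⊤:ℕ∞) p1 := step _ hf₁'
  have cq1 : ContDiff ℝ (⊤:ℕ∞) q1 := step _ hf₂'
  have cp2 : ContDiff ℝ (⊤:ℕ∞) p2 := step _ cp1
  have cq2 : ContDiff ℝ (⊤:ℕ∞) q2 := step _ cq1
  have cp3 : ContDiff ℝ (⊤:ℕ∞) p3 := step _ cp2
  have cq3 : ContDiff ℝ (⊤:ℕ∞) q3 := step _ cq2
  have Hf₁ : ∀ w, HasDerivAt f₁ (p1 w) w := HD _ hf₁'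
  have Hf₂ : ∀ w, HasDerivAt f₂ (q1 w) w := HD _ hf₂'
  have Hp1 : ∀ w, HasDerivAt p1 (p2 w) w := HD _ cp1
  have Hq1 : ∀ w, HasDerivAt q1 (q2 w) w := HD _ cq1
  have Hp2 : ∀ w, HasDerivAt p2 (p3 w) w := HD _ cp2
  have Hq2 : ∀ w, HasDerivAt q2 (q3 w) w := HD _ cq2
  have Hp3 : ∀ w, HasDerivAt p3 (p4 w) w := HD _ cp3
  have Hq3 : ∀ w, HasDerivAt q3 (q4 w) w := HD _ cq3
  -- values at 0
  have vp2 : p2 0 = 2 * a₂ := by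
    have : iteratedDeriv 2 f₁ 0 = p2 0 := by
      simp [iteratedDeriv_succ, iteratedDeriv_one, hp2, hp1]
    rw [ha₂, this]; ring
  have vq2 : q2 0 = 2 * b₂ := by
    have : iteratedDeriv 2 f₂ 0 = q2 0 := by
      simp [iteratedDeriv_succ, iteratedDeriv_one, hq2, hq1]
    rw [hb₂, this]; ring
  have vp3 : p3 0 = 6 * a₃ := by
    have : iteratedDeriv 3 f₁ 0 = p3 0 := by
      simp [iteratedDeriv_succ, iteratedDeriv_one, hp3, hp2, hp1]
    rw [ha₃, this]; ring
  have vq3 : q3 0 = 6 * b₃ := by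
    have : iteratedDeriv 3 f₂ 0 = q3 0 := by
      simp [iteratedDeriv_succ, iteratedDeriv_one, hq3, hq2, hq1]
    rw [hb₃, this]; ring
  have vp4 : p4 0 = 24 * a₄ := by
    have : iteratedDeriv 4 f₁ 0 = p4 0 := by
      simp [iteratedDeriv_succ, iteratedDeriv_one, hp4, hp3, hp2, hp1]
    rw [ha₄, this]; ring
  have vq4 : q4 0 = 24 * b₄ := by
    have : iteratedDeriv 4 f₂ 0 = q4 0 := by
      simp [iteratedDeriv_succ, iteratedDeriv_one, hq4, hq3, hq2, hq1]
    rw [hb₄, this]; ring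
  -- derivative of γ
  have hγ1 : deriv γ = fun w => (WithLp.equiv 2 (Fin 3 → ℝ)).symm ![1, p1 w, q1 w] := by
    funext w
    have hc : HasDerivAt (fun w => ![w, f₁ w, f₂ w] : ℝ → Fin 3 → ℝ) ![1, p1 w, q1 w] w := by
      rw [hasDerivAt_pi]
      intro i
      fin_cases i <;> simp [hasDerivAt_id', Hf₁ w, Hf₂ w]
    have h := ((EuclideanSpace.equiv (Fin 3) ℝ).symm.toContinuousLinearMap.hasFDerivAt).comp_hasDerivAt w hc
    have h' : HasDerivAt γ ((WithLp.equiv 2 (Fin 3 → ℝ)).symm ![1, p1 w, q1 w]) w := by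
      rw [hγ]; exact h
    exact h'.deriv
  have hγ2 : deriv (deriv γ) = fun w => (WithLp.equiv 2 (Fin 3 → ℝ)).symm ![0, p2 w, q2 w] := by
    funext w
    have hc : HasDerivAt (fun w => ![(1:ℝ), p1 w, q1 w] : ℝ → Fin 3 → ℝ) ![0, p2 w, q2 w] w := by
      rw [hasDerivAt_pi]
      intro i
      fin_cases i <;> simp [hasDerivAt_const, Hp1 w, Hq1 w]
    have h := ((EuclideanSpace.equiv (Fin 3) ℝ).symm.toContinuousLinearMap.hasFDerivAt).comp_hasDerivAt w hc
    have h' : HasDerivAt (deriv γ) ((WithLp.equiv 2 (Fin 3 → ℝ)).symm ![0, p2 w, q2 w]) w := by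
      rw [hγ1]; exact h
    exact h'.deriv
  -- norms
  have hnorm : ∀ v : Fin 3 → ℝ,
      ‖(WithLp.equiv 2 (Fin 3 → ℝ)).symm v‖ = Real.sqrt ((v 0)^2 + (v 1)^2 + (v 2)^2) := by
    intro v
    rw [EuclideanSpace.norm_eq]
    simp [Fin.sum_univ_three, Real.norm_eq_abs, sq_abs]
  have hγnorm : ∀ w, ‖deriv γ w‖ = Real.sqrt (1 + (p1 w)^2 + (q1 w)^2) := by
    intro w
    rw [hγ1]
    rw [hnorm]
    norm_num
    rfl
  -- κ as explicit formula
  have hκ2 : κ = fun w => Real.sqrt ((p1 w * q2 w - q1 w * p2 w)^2 + (q2 w)^2 + (p2 w)^2)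
      / Real.sqrt (1 + (p1 w)^2 + (q1 w)^2) ^ 3 := by
    funext w
    rw [hκ]
    simp only [hγ2, Equiv.apply_symm_apply]
    simp only [hγ1, Equiv.apply_symm_apply]
    have hcr : crossProduct ![(1:ℝ), p1 w, q1 w] ![0, p2 w, q2 w]
        = ![p1 w * q2 w - q1 w * p2 w, -(q2 w), p2 w] := by
      simp [crossProduct]
    rw [hcr, hnorm, hnorm]
    simp [Matrix.cons_val_zero, Matrix.cons_val_one, Matrix.head_cons]
  set A : ℝ → ℝ := fun w => p1 w * q2 w - q1 w * p2 w with hA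
  set B : ℝ → ℝ := fun w => p1 w * q3 w - q1 w * p3 w with hB
  set Nf : ℝ → ℝ := fun w => (A w)^2 + (q2 w)^2 + (p2 w)^2 with hNf
  set N' : ℝ → ℝ := fun w => 2*A w*B w + 2*q2 w*q3 w + 2*p2 w*p3 w with hN'
  set Df : ℝ → ℝ := fun w => 1 + (p1 w)^2 + (q1 w)^2 with hDf
  set D' : ℝ → ℝ := fun w => 2*p1 w*p2 w + 2*q1 w*q2 w with hD'
  have hκ3 : κ = fun w => Real.sqrt (Nf w) / Real.sqrt (Df w) ^ 3 := hκ2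
  have HA : ∀ w, HasDerivAt A (B w) w := by
    intro w
    have h := ((Hp1 w).mul (Hq2 w)).sub ((Hq1 w).mul (Hp2 w))
    refine h.congr_deriv ?_
    simp only [hB]
    ring
  have HB : ∀ w, HasDerivAt B ((p2 w * q3 w + p1 w * q4 w) - (q2 w * p3 w + q1 w * p4 w)) w := by
    intro w
    have h := ((Hp1 w).mul (Hq3 w)).sub ((Hq1 w).mul (Hp3 w))
    refine h.congr_deriv ?_
    try ring
  have HN : ∀ w, HasDerivAt Nf (N' w) w := by
    intro w
    have h := (((HA w).pow 2).add ((Hq2 w).pow 2)).add ((Hp2 w).pow 2)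
    refine h.congr_deriv ?_
    simp only [hN']
    norm_num
    try ring
  have HDf : ∀ w, HasDerivAt Df (D' w) w := by
    intro w
    have h := ((hasDerivAt_const w (1:ℝ)).add ((Hp1 w).pow 2)).add ((Hq1 w).pow 2)
    refine h.congr_deriv ?_
    simp only [hD']
    norm_num
    try ring
  have HN2 : ∀ w, HasDerivAt N' (2*(B w * B w + A w * ((p2 w * q3 w + p1 w * q4 w) - (q2 w * p3 w + q1 w * p4 w))) + 2*((q3 w)^2 + q2 w * q4 w) + 2*((p3 w)^2 + p2 w * p4 w)) w := by
    intro w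
    have h := ((((HA w).const_mul 2).mul (HB w)).add (((Hq2 w).const_mul 2).mul (Hq3 w))).add (((Hp2 w).const_mul 2).mul (Hp3 w))
    refine h.congr_deriv ?_
    try ring
  have HD2 : ∀ w, HasDerivAt D' (2*((p2 w)^2 + p1 w * p3 w) + 2*((q2 w)^2 + q1 w * q3 w)) w := by
    intro w
    have h := (((Hp1 w).const_mul 2).mul (Hp2 w)).add (((Hq1 w).const_mul 2).mul (Hq2 w))
    refine h.congr_deriv ?_
    try ring
  clear_value p1 q1 p2 q2 p3 q3 p4 q4 A B Nf N' Df D'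
  have hab' : a₂ ≠ 0 ∨ b₂ ≠ 0 := by
    by_contra h
    push_neg at h
    exact hab (by simp [h.1, h.2])
  have hs : 0 < b₂ ^ 2 + a₂ ^ 2 := by
    rcases hab' with h | h
    · have : 0 < a₂ ^ 2 := by positivity
      nlinarith [sq_nonneg b₂]
    · have : 0 < b₂ ^ 2 := by positivity
      nlinarith [sq_nonneg a₂]
  have hN0 : 0 < Nf 0 := by
    simp only [hNf, hA, h₁1, h₂1, vp2, vq2]
    norm_num
    ring_nf
    linarith [hs]
  have hNcont : Continuous Nf := by
    rw [hNf, hA]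
    exact (((cp1.continuous.mul cq2.continuous).sub (cq1.continuous.mul cp2.continuous)).pow 2).add
      ((cq2.continuous.pow 2).add (cp2.continuous.pow 2)) |>.congr (by intro w; simp only [Pi.add_apply, Pi.sub_apply, Pi.mul_apply, Pi.pow_apply]; ring)
  have hev : ∀ᶠ w in nhds 0, 0 < Nf w :=
    (hNcont.continuousAt (x := 0)).eventually (eventually_gt_nhds hN0)
  have hDpos : ∀ w, 0 < Df w := by
    intro w
    simp only [hDf]
    positivity
  have hDrpos : ∀ w, 0 < Real.sqrt (Df w) := fun w => Real.sqrt_pos.2 (hDpos w)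
  have hκd : ∀ w, 0 < Nf w → HasDerivAt κ
      ((N' w * Df w - 3 * Nf w * D' w) / (2 * Real.sqrt (Nf w) * Real.sqrt (Df w)^5)) w := by
    intro w hw
    have hsq : HasDerivAt (fun w => Real.sqrt (Nf w)) (N' w / (2*Real.sqrt (Nf w))) w :=
      (HN w).sqrt (ne_of_gt hw)
    have hDsq : HasDerivAt (fun w => Real.sqrt (Df w)) (D' w / (2*Real.sqrt (Df w))) w :=
      (HDf w).sqrt (ne_of_gt (hDpos w))
    have hcube := hDsq.pow 3
    have hq := hsq.div hcube (ne_of_gt (pow_pos (hDrpos w) 3))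
    rw [hκ3]
    refine hq.congr_deriv ?_
    simp only [Pi.pow_apply]
    have hx : Real.sqrt (Nf w) ^ 2 = Nf w := Real.sq_sqrt hw.le
    have hy : Real.sqrt (Df w) ^ 2 = Df w := Real.sq_sqrt (hDpos w).le
    set x := Real.sqrt (Nf w) with hxd
    set y := Real.sqrt (Df w) with hyd
    clear_value x y
    have hx0 : x ≠ 0 := by rw [hxd]; exact ne_of_gt (Real.sqrt_pos.2 hw)
    have hy0 : y ≠ 0 := by rw [hyd]; exact ne_of_gt (hDrpos w)
    rw [← hx, ← hy]
    field_simp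
    ring
  have hγnormD : ∀ w, ‖deriv γ w‖ = Real.sqrt (Df w) := by
    intro w; simp only [hγnorm w, hDf]
  have hev2 : (fun w => deriv κ w / ‖deriv γ w‖) =ᶠ[nhds 0]
      (fun w => (N' w * Df w - 3 * Nf w * D' w) / (2 * Real.sqrt (Nf w) * Real.sqrt (Df w)^5)
        / Real.sqrt (Df w)) := by
    filter_upwards [hev] with w hw
    rw [(hκd w hw).deriv, hγnormD w]
  have hsq0 : HasDerivAt (fun w => Real.sqrt (Nf w)) (N' 0 / (2*Real.sqrt (Nf 0))) 0 :=
    (HN 0).sqrt (ne_of_gt hN0)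
  have hDsq0 : HasDerivAt (fun w => Real.sqrt (Df w)) (D' 0 / (2*Real.sqrt (Df 0))) 0 :=
    (HDf 0).sqrt (ne_of_gt (hDpos 0))
  have hNum := ((HN2 0).mul (HDf 0)).sub (((HN 0).const_mul 3).mul (HD2 0))
  have hDen := (hsq0.const_mul 2).mul (hDsq0.pow 5)
  have hDen0 : (2 * Real.sqrt (Nf 0) * Real.sqrt (Df 0)^5) ≠ 0 :=
    ne_of_gt (mul_pos (mul_pos two_pos (Real.sqrt_pos.2 hN0)) (pow_pos (hDrpos 0) 5))
  have hG := hNum.div hDen hDen0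
  have hF := hG.div hDsq0 (ne_of_gt (hDrpos 0))
  have key := hev2.deriv_eq.trans hF.deriv
  rw [key, hγnormD 0]
  have vA : A 0 = 0 := by simp only [hA]; rw [h₁1, h₂1]; ring
  have vB : B 0 = 0 := by simp only [hB]; rw [h₁1, h₂1]; ring
  have vN : Nf 0 = 4*b₂^2 + 4*a₂^2 := by
    simp only [hNf, hA]; rw [h₁1, h₂1, vp2, vq2]; ring
  have vN' : N' 0 = 24*(a₂*a₃ + b₂*b₃) := by
    simp only [hN', hA, hB]; rw [h₁1, h₂1, vp2, vq2, vp3, vq3]; ring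
  have vD : Df 0 = 1 := by simp only [hDf]; rw [h₁1, h₂1]; ring
  have vD' : D' 0 = 0 := by simp only [hD']; rw [h₁1, h₂1]; ring
  simp only [Pi.pow_apply, Pi.mul_apply, Pi.div_apply, Pi.sub_apply, Pi.add_apply]
  rw [vA, vB, vN, vN', vD, vD', h₁1, h₂1, vp2, vq2, vp3, vq3, vp4, vq4, Real.sqrt_one]
  norm_num
  set t := Real.sqrt (4*b₂^2 + 4*a₂^2) with htd
  have ht2 : t^2 = 4*b₂^2 + 4*a₂^2 := Real.sq_sqrt (by positivity)
  have ht0 : 0 < t := Real.sqrt_pos.2 (by nlinarith [hs])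
  clear_value t
  have hs' : (b₂ ^ 2 + a₂ ^ 2) ≠ 0 := ne_of_gt hs
  field_simp
  linear_combination (-4*((12 * b₂ ^ 3 + 12 * a₂ ^ 2 * b₂) * b₄ + 9 * a₂ ^ 2 * b₃ ^ 2 - 18 * a₂ * a₃ * b₂ * b₃ - 12 * b₂ ^ 6 - 36 * a₂ ^ 2 * b₂ ^ 4 + (12 * a₂ * a₄ + 9 * a₃ ^ 2 - 36 * a₂ ^ 4) * b₂ ^ 2 + 12 * a₂ ^ 3 * a₄ - 12 * a₂ ^ 6)*(t^2 + 4*(b₂^2+a₂^2))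
    + 4*(b₂^2+a₂^2)^2*(36*(a₃^2+b₃^2) + 48*(a₂*a₄+b₂*b₄) - 48*(b₂^2+a₂^2)^2)) * ht2
end
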